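/- Let G and H be finite connected nontrivial simple graphs. Then β(G_SR ⊠ H_SR) ≥ β((G ⊠ H)_SR) ≥ β(G_SR ⊕ H_SR), where β denotes the independence number. -/

import Mathlib

/-!
Distances in `G ⊠ H` are the maximum of the distances in the two coordinates. Hence a pair whose
coordinates are each equal or mutually maximally distant is mutually maximally distant in `G ⊠ H`,
so `G_SR ⊠ H_SR ≤ (G ⊠ H)_SR`. Conversely, a mutually maximally distant pair of `G ⊠ H` is mutually
maximally distant in a coordinate realising the maximum, so `(G ⊠ H)_SR ≤ G_SR ⊕ H_SR`. Both
inequalities follow because the independence number is antitone in the edge set.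
-/

open SimpleGraph Finset

variable {α β : Type*}

/-- The strong product of two simple graphs: distinct vertices `(a,b)` and `(c,d)` are adjacent
iff (`a = c` or `a ~ c`) and (`b = d` or `b ~ d`). -/
def strongProd (G : SimpleGraph α) (H : SimpleGraph β) : SimpleGraph (α × β) where
  Adj x y := x ≠ y ∧ (x.1 = y.1 ∨ G.Adj x.1 y.1) ∧ (x.2 = y.2 ∨ H.Adj x.2 y.2)
  symm := ⟨by
    rintro x y ⟨h1, h2, h3⟩
    exact ⟨h1.symm, h2.imp Eq.symm (fun a => a.symm), h3.imp Eq.symm (fun a => a.symm)⟩⟩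
  loopless := ⟨fun x h => h.1 rfl⟩

/-- The Cartesian sum (disjunctive product) of two simple graphs. -/
def cartSum (G : SimpleGraph α) (H : SimpleGraph β) : SimpleGraph (α × β) where
  Adj x y := x ≠ y ∧ (G.Adj x.1 y.1 ∨ H.Adj x.2 y.2)
  symm := ⟨by
    rintro x y ⟨h1, h2⟩
    exact ⟨h1.symm, h2.imp (fun a => a.symm) (fun a => a.symm)⟩⟩
  loopless := ⟨fun x h => h.1 rfl⟩

/-- `u` is maximally distant from `v` in `G`. -/
def MaximallyDistantFrom (G : SimpleGraph α) (u v : α) : Prop :=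
  ∀ w, G.Adj u w → G.dist v w ≤ G.dist u v

/-- `u` and `v` are mutually maximally distant in `G`. -/
def MutuallyMaximallyDistant (G : SimpleGraph α) (u v : α) : Prop :=
  MaximallyDistantFrom G u v ∧ MaximallyDistantFrom G v u

/-- The strong resolving graph of `G`. -/
def strongResolvingGraph (G : SimpleGraph α) : SimpleGraph α where
  Adj u v := u ≠ v ∧ MutuallyMaximallyDistant G u v
  symm := ⟨by rintro u v ⟨h1, h2, h3⟩; exact ⟨h1.symm, h3, h2⟩⟩
  loopless := ⟨fun x h => h.1 rfl⟩

/-- A finset of vertices is independent if no two of its (distinct) members are adjacent. -/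
def IsIndepFinset (G : SimpleGraph α) (s : Finset α) : Prop :=
  ∀ u ∈ s, ∀ v ∈ s, u ≠ v → ¬ G.Adj u v

/-- The independence number `β(G)`. -/
noncomputable def indepNum (G : SimpleGraph α) [Fintype α] : ℕ :=
  sSup {n | ∃ s : Finset α, IsIndepFinset G s ∧ s.card = n}

/-- `w` strongly resolves `u` and `v` in `G`. -/
def StronglyResolves (G : SimpleGraph α) (w u v : α) : Prop :=
  G.dist w u = G.dist w v + G.dist v u ∨ G.dist w v = G.dist w u + G.dist u v

/-- A strong metric generator for `G`. -/
def IsStrongMetricGenerator (G : SimpleGraph α) (s : Finset α) : Prop :=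
  ∀ u v : α, u ≠ v → ∃ w ∈ s, StronglyResolves G w u v

/-- The strong metric dimension of `G`. -/
noncomputable def sdim (G : SimpleGraph α) [Fintype α] : ℕ :=
  sInf {n | ∃ s : Finset α, IsStrongMetricGenerator G s ∧ s.card = n}

lemma SimpleGraph.dist_le_one_of_eq_or_adj {V : Type*} {G : SimpleGraph V} {u v : V}
    (h : u = v ∨ G.Adj u v) : G.dist u v ≤ 1 := by
  rcases h with rfl | h
  · simp
  · exact (dist_eq_one_iff_adj.mpr h).le

lemma SimpleGraph.dist_map_le_length {γ : Type*} {G : SimpleGraph α} {K : SimpleGraph γ}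
    (hK : K.Connected) (f : α → γ) (hf : ∀ ⦃u v⦄, G.Adj u v → f u = f v ∨ K.Adj (f u) (f v))
    {x y : α} (p : G.Walk x y) : K.dist (f x) (f y) ≤ p.length := by
  induction p with
  | nil => simp
  | @cons u v w h p ih =>
    calc K.dist (f u) (f w) ≤ K.dist (f u) (f v) + K.dist (f v) (f w) := hK.dist_triangle
      _ ≤ 1 + p.length := add_le_add (dist_le_one_of_eq_or_adj (hf h)) ih
      _ = (Walk.cons h p).length := by rw [Walk.length_cons, add_comm]

lemma indepNum_anti [Fintype α] : Antitone (fun G : SimpleGraph α => _root_.indepNum G) := by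
  intro A B hAB
  apply csSup_le_csSup
  · exact ⟨Fintype.card α, by rintro n ⟨s, -, rfl⟩; exact s.card_le_univ⟩
  · exact ⟨0, ∅, by simp [IsIndepFinset], rfl⟩
  · rintro n ⟨s, hs, rfl⟩
    exact ⟨s, fun u hu v hv huv hadj => hs u hu v hv huv (hAB hadj), rfl⟩

section StrongProduct

variable {G : SimpleGraph α} {H : SimpleGraph β}

def strongProdLeft (G : SimpleGraph α) (H : SimpleGraph β) (b : β) : G →g strongProd G H where
  toFun a := (a, b)
  map_rel' h := ⟨fun he => h.ne (congrArg Prod.fst he), Or.inr h, Or.inl rfl⟩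

def strongProdRight (G : SimpleGraph α) (H : SimpleGraph β) (a : α) : H →g strongProd G H where
  toFun b := (a, b)
  map_rel' h := ⟨fun he => h.ne (congrArg Prod.snd he), Or.inl rfl, Or.inr h⟩

/-- Walk along both factors simultaneously, and along the longer one alone once the other ends. -/
lemma exists_strongProd_walk_length_eq_max {a c : α} {b d : β} (p : G.Walk a c)
    (q : H.Walk b d) :
    ∃ r : (strongProd G H).Walk (a, b) (c, d), r.length = max p.length q.length := by
  induction p generalizing b d with
  | nil => exact ⟨q.map (strongProdRight G H _), (Walk.length_map _ _).trans (by simp)⟩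
  | @cons a a' c hadj p ih =>
    cases q with
    | nil =>
      exact ⟨(Walk.cons hadj p).map (strongProdLeft G H _), (Walk.length_map _ _).trans (by simp)⟩
    | @cons b b' d hadj' q =>
      obtain ⟨r, hr⟩ := ih q
      exact ⟨Walk.cons ⟨fun he => hadj.ne (congrArg Prod.fst he), Or.inr hadj, Or.inr hadj'⟩ r,
        (Walk.length_cons _ _).trans (by simp [hr])⟩

lemma strongProd_dist (hG : G.Connected) (hH : H.Connected) (x y : α × β) :
    (strongProd G H).dist x y = max (G.dist x.1 y.1) (H.dist x.2 y.2) := by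
  obtain ⟨a, b⟩ := x
  obtain ⟨c, d⟩ := y
  obtain ⟨p, hp⟩ := hG.exists_walk_length_eq_dist a c
  obtain ⟨q, hq⟩ := hH.exists_walk_length_eq_dist b d
  obtain ⟨r, hr⟩ := exists_strongProd_walk_length_eq_max p q
  obtain ⟨s, hs⟩ := Reachable.exists_walk_length_eq_dist ⟨r⟩
  have hfst := dist_map_le_length hG Prod.fst (fun _ _ (h : (strongProd G H).Adj _ _) => h.2.1) s
  have hsnd := dist_map_le_length hH Prod.snd (fun _ _ (h : (strongProd G H).Adj _ _) => h.2.2) s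
  have hle := dist_le r
  dsimp only at hfst hsnd ⊢
  omega

lemma pos_max_dist_of_ne (hG : G.Connected) (hH : H.Connected) {x y : α × β} (hne : x ≠ y) :
    0 < max (G.dist x.1 y.1) (H.dist x.2 y.2) := by
  by_contra! h
  exact hne (Prod.ext (hG.dist_eq_zero_iff.mp (by omega)) (hH.dist_eq_zero_iff.mp (by omega)))

lemma dist_le_max_one_of_maximallyDistantFrom {a c w : α}
    (h : a = c ∨ MaximallyDistantFrom G a c) (hw : a = w ∨ G.Adj a w) :
    G.dist c w ≤ max (G.dist a c) 1 := by
  rcases hw with rfl | hw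
  · rw [dist_comm]; exact le_max_left _ _
  rcases h with rfl | h
  · exact le_max_of_le_right (dist_le_one_of_eq_or_adj (Or.inr hw))
  · exact le_max_of_le_left (h w hw)

lemma maximallyDistantFrom_strongProd (hG : G.Connected) (hH : H.Connected) {x y : α × β}
    (hne : x ≠ y) (h₁ : x.1 = y.1 ∨ MaximallyDistantFrom G x.1 y.1)
    (h₂ : x.2 = y.2 ∨ MaximallyDistantFrom H x.2 y.2) :
    MaximallyDistantFrom (strongProd G H) x y := by
  rintro w ⟨-, hw₁, hw₂⟩
  have hpos := pos_max_dist_of_ne hG hH hne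
  have hd₁ := dist_le_max_one_of_maximallyDistantFrom h₁ hw₁
  have hd₂ := dist_le_max_one_of_maximallyDistantFrom h₂ hw₂
  rw [strongProd_dist hG hH, strongProd_dist hG hH]
  omega

lemma MaximallyDistantFrom.fst_of_strongProd (hG : G.Connected) (hH : H.Connected)
    {x y : α × β} (h : MaximallyDistantFrom (strongProd G H) x y)
    (hle : H.dist x.2 y.2 ≤ G.dist x.1 y.1) : MaximallyDistantFrom G x.1 y.1 := by
  intro w hw
  have := h (w, x.2) ((strongProdLeft G H x.2).map_adj hw)
  rw [strongProd_dist hG hH, strongProd_dist hG hH, dist_comm (u := y.2)] at this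
  dsimp only at this
  omega

lemma MaximallyDistantFrom.snd_of_strongProd (hG : G.Connected) (hH : H.Connected)
    {x y : α × β} (h : MaximallyDistantFrom (strongProd G H) x y)
    (hle : G.dist x.1 y.1 ≤ H.dist x.2 y.2) : MaximallyDistantFrom H x.2 y.2 := by
  intro w hw
  have := h (x.1, w) ((strongProdRight G H x.1).map_adj hw)
  rw [strongProd_dist hG hH, strongProd_dist hG hH, dist_comm (u := y.1)] at this
  dsimp only at this
  omega

lemma strongProd_strongResolvingGraph_le (hG : G.Connected) (hH : H.Connected) :
    strongProd (strongResolvingGraph G) (strongResolvingGraph H) ≤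
      strongResolvingGraph (strongProd G H) := by
  rintro x y ⟨hne, h₁, h₂⟩
  exact ⟨hne,
    maximallyDistantFrom_strongProd hG hH hne (h₁.imp_right (·.2.1)) (h₂.imp_right (·.2.1)),
    maximallyDistantFrom_strongProd hG hH hne.symm (h₁.imp Eq.symm (·.2.2))
      (h₂.imp Eq.symm (·.2.2))⟩

lemma strongResolvingGraph_strongProd_le_cartSum (hG : G.Connected) (hH : H.Connected) :
    strongResolvingGraph (strongProd G H) ≤
      cartSum (strongResolvingGraph G) (strongResolvingGraph H) := by
  rintro x y ⟨hne, hxy, hyx⟩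
  have hpos := pos_max_dist_of_ne hG hH hne
  have hG' : G.dist y.1 x.1 = G.dist x.1 y.1 := dist_comm
  have hH' : H.dist y.2 x.2 = H.dist x.2 y.2 := dist_comm
  refine ⟨hne, ?_⟩
  rcases le_total (H.dist x.2 y.2) (G.dist x.1 y.1) with hle | hle
  · refine Or.inl ⟨fun he => ?_, hxy.fst_of_strongProd hG hH hle,
      hyx.fst_of_strongProd hG hH (by omega)⟩
    rw [he, dist_self] at hle hpos
    omega
  · refine Or.inr ⟨fun he => ?_, hxy.snd_of_strongProd hG hH hle,
      hyx.snd_of_strongProd hG hH (by omega)⟩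
    rw [he, dist_self] at hle hpos
    omega

end StrongProduct

theorem indepNum_SR_chain_general [Fintype α] [Fintype β]
    (G : SimpleGraph α) (H : SimpleGraph β)
    (hG : G.Connected) (hH : H.Connected) :
    _root_.indepNum (strongProd (strongResolvingGraph G) (strongResolvingGraph H)) ≥
      _root_.indepNum (strongResolvingGraph (strongProd G H)) ∧
    _root_.indepNum (strongResolvingGraph (strongProd G H)) ≥
      _root_.indepNum (cartSum (strongResolvingGraph G) (strongResolvingGraph H)) :=
  ⟨indepNum_anti (strongProd_strongResolvingGraph_le hG hH),
    indepNum_anti (strongResolvingGraph_strongProd_le_cartSum hG hH)⟩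

theorem indepNum_SR_chain [Fintype α] [Fintype β]
    (G : SimpleGraph α) (H : SimpleGraph β)
    (hG : G.Connected) (hGn : Nontrivial α) (hH : H.Connected) (hHn : Nontrivial β) :
    _root_.indepNum (strongProd (strongResolvingGraph G) (strongResolvingGraph H)) ≥
      _root_.indepNum (strongResolvingGraph (strongProd G H)) ∧
    _root_.indepNum (strongResolvingGraph (strongProd G H)) ≥
      _root_.indepNum (cartSum (strongResolvingGraph G) (strongResolvingGraph H)) :=
  indepNum_SR_chain_general G H hG hH
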